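/- Let T = (V, E, ρ) be a binary rooted phylogenetic tree on X together with an interior-positive normalized equidistant edge weighting ω, and let D = D_{(T,ω)} be the induced dissimilarity. Then σ_D(T) = min{σ_D(T') : T' a binary rooted phylogenetic tree on X}, i.e., T attains the minimum NEME score among all binary rooted phylogenetic trees on X. -/
import Mathlib


open Finset

/-- A rooted phylogenetic tree on `X`, encoded by its hierarchy of clusters:
the single child of the root corresponds to the cluster `univ`, leaves to singletons,
and the internal vertices to the clusters of the laminar family. -/
structure RPhyloTree (X : Type*) [Fintype X] [DecidableEq X] where
  clusters : Finset (Finset X)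
  top_mem : (Finset.univ : Finset X) ∈ clusters
  singleton_mem : ∀ x : X, ({x} : Finset X) ∈ clusters
  laminar : ∀ C ∈ clusters, ∀ D ∈ clusters, C ⊆ D ∨ D ⊆ C ∨ Disjoint C D

namespace RPhyloTree

variable {X : Type*} [Fintype X] [DecidableEq X]

/-- The children of the vertex (cluster) `C`: the maximal clusters strictly below `C`. -/
def children (t : RPhyloTree X) (C : Finset X) : Finset (Finset X) :=
  t.clusters.filter (fun A => A ⊂ C ∧ ∀ B ∈ t.clusters, A ⊂ B → ¬ B ⊂ C)

/-- The lowest common ancestor of `x` and `y`: the smallest cluster containing both. -/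
def lca (t : RPhyloTree X) (x y : X) : Finset X :=
  (t.clusters.filter fun C => x ∈ C ∧ y ∈ C).inf'
    ⟨Finset.univ, by simp [t.top_mem]⟩ id

/-- The NEME coefficient `α^T_{x,y} = (deg(lca(x,y)) - 2) /
(2 · Σ_{{u,u'} ⊆ ch(lca(x,y))} |C(u)|·|C(u')|)`.  Here the sum over ordered pairs of
distinct children (`offDiag`) equals twice the sum over unordered pairs, and the
degree of an internal vertex is the number of its children plus one. -/
noncomputable def coeff (t : RPhyloTree X) (x y : X) : ℝ :=
  (((t.children (t.lca x y)).card : ℝ) - 1) /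
    (∑ p ∈ (t.children (t.lca x y)).offDiag, ((p.1.card : ℝ) * (p.2.card : ℝ)))

/-- The NEME score `σ_D(T) = Σ_{{x,y}} α^T_{x,y} · D(x,y)`; the sum over ordered pairs
of distinct elements is twice the sum over unordered pairs. -/
noncomputable def score (t : RPhyloTree X) (D : X → X → ℝ) : ℝ :=
  (1 / 2) * ∑ p ∈ (Finset.univ : Finset X).offDiag, t.coeff p.1 p.2 * D p.1 p.2

/-- A rooted phylogenetic tree is binary if every internal vertex has exactly two children. -/
def IsBinary (t : RPhyloTree X) : Prop :=
  ∀ C ∈ t.clusters, 2 ≤ C.card → (t.children C).card = 2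

end RPhyloTree

/-- A dissimilarity on `X`: symmetric and vanishing on the diagonal. -/
def IsDissimilarity {X : Type*} (D : X → X → ℝ) : Prop :=
  (∀ x y, D x y = D y x) ∧ ∀ x, D x x = 0

/-- The dissimilarity `D_{(T,ω)}` induced by a normalized equidistant edge weighting,
described by the height function `h` of the internal vertices (clusters):
`D(x,y) = 2·h(lca(x,y))` for `x ≠ y`, and `D(x,x) = 0`. -/
noncomputable def inducedDissim {X : Type*} [Fintype X] [DecidableEq X]
    (t : RPhyloTree X) (h : Finset X → ℝ) : X → X → ℝ :=
  fun x y => if x = y then 0 else 2 * h (t.lca x y)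

namespace RPhyloTree

variable {X : Type*} [Fintype X] [DecidableEq X]

variable (T : RPhyloTree X)

/-- Two clusters sharing an element are comparable. -/
lemma comparable {C D : Finset X} (hC : C ∈ T.clusters) (hD : D ∈ T.clusters)
    {x : X} (hxC : x ∈ C) (hxD : x ∈ D) : C ⊆ D ∨ D ⊆ C := by
  rcases T.laminar C hC D hD with h | h | h
  · exact Or.inl h
  · exact Or.inr h
  · exact absurd (h.forall_ne_finset (by simpa using hxC) (by simpa using hxD)) (by simp)

lemma lca_spec (x y : X) : T.lca x y ∈ T.clusters ∧ x ∈ T.lca x y ∧ y ∈ T.lca x y ∧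
    ∀ C ∈ T.clusters, x ∈ C → y ∈ C → T.lca x y ⊆ C := by
  classical
  set s := T.clusters.filter (fun C => x ∈ C ∧ y ∈ C) with hs
  have hne : s.Nonempty := ⟨Finset.univ, by simp [hs, T.top_mem]⟩
  obtain ⟨m, hm, hmin⟩ := Finset.exists_min_image s Finset.card hne
  have hmmem : m ∈ T.clusters ∧ x ∈ m ∧ y ∈ m := by simpa [hs] using hm
  have hsub : ∀ b ∈ s, m ⊆ b := by
    intro b hb
    have hbmem : b ∈ T.clusters ∧ x ∈ b ∧ y ∈ b := by simpa [hs] using hb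
    rcases T.comparable hmmem.1 hbmem.1 hmmem.2.1 hbmem.2.1 with h | h
    · exact h
    · exact (Finset.eq_of_subset_of_card_le h (hmin b hb)) ▸ Finset.Subset.refl _
  have : T.lca x y = m := by
    apply le_antisymm
    · exact Finset.inf'_le id hm
    · exact Finset.le_inf' _ id hsub
  rw [this]
  refine ⟨hmmem.1, hmmem.2.1, hmmem.2.2, ?_⟩
  intro C hC hxC hyC
  exact hsub C (by simp [hs, hC, hxC, hyC])

lemma lca_mem (x y : X) : T.lca x y ∈ T.clusters := (T.lca_spec x y).1
lemma left_mem_lca (x y : X) : x ∈ T.lca x y := (T.lca_spec x y).2.1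
lemma right_mem_lca (x y : X) : y ∈ T.lca x y := (T.lca_spec x y).2.2.1
lemma lca_min {x y : X} {C : Finset X} (hC : C ∈ T.clusters) (hx : x ∈ C) (hy : y ∈ C) :
    T.lca x y ⊆ C := (T.lca_spec x y).2.2.2 C hC hx hy

lemma mem_children {A C : Finset X} : A ∈ T.children C ↔
    A ∈ T.clusters ∧ A ⊂ C ∧ ∀ B ∈ T.clusters, A ⊂ B → ¬ B ⊂ C := by
  simp [children, and_assoc]

lemma children_disjoint {A B C : Finset X} (hA : A ∈ T.children C) (hB : B ∈ T.children C)
    (hAB : A ≠ B) : Disjoint A B := by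
  rw [mem_children] at hA hB
  rcases T.laminar A hA.1 B hB.1 with h | h | h
  · exact absurd hB.2.1 (hA.2.2 B hB.1 (h.ssubset_of_ne hAB))
  · exact absurd hA.2.1 (hB.2.2 A hA.1 (h.ssubset_of_ne (Ne.symm hAB)))
  · exact h

lemma mem_child {C : Finset X} (hC : C ∈ T.clusters) (h2 : 2 ≤ C.card) {x : X}
    (hx : x ∈ C) : ∃ A ∈ T.children C, x ∈ A := by
  classical
  set s := T.clusters.filter (fun B => x ∈ B ∧ B ⊂ C) with hs
  have hxC : ({x} : Finset X) ⊂ C := by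
    refine Finset.ssubset_iff_subset_ne.2 ⟨by simpa using hx, ?_⟩
    intro e; rw [← e] at h2; simp at h2
  have hne : s.Nonempty := ⟨{x}, by simp [hs, T.singleton_mem x, hxC]⟩
  obtain ⟨A, hA, hmax⟩ := Finset.exists_max_image s Finset.card hne
  have hAmem : A ∈ T.clusters ∧ x ∈ A ∧ A ⊂ C := by simpa [hs] using hA
  refine ⟨A, ?_, hAmem.2.1⟩
  rw [mem_children]
  refine ⟨hAmem.1, hAmem.2.2, ?_⟩
  intro B hB hAB hBC
  have hBs : B ∈ s := by simp [hs, hB, hAB.subset hAmem.2.1, hBC]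
  exact absurd (hmax B hBs) (not_le.2 (Finset.card_lt_card hAB))

/-- Structure of children for a binary tree. -/
lemma binary_children {C : Finset X} (hT : ∀ C ∈ T.clusters, 2 ≤ C.card → (T.children C).card = 2)
    (hC : C ∈ T.clusters) (h2 : 2 ≤ C.card) :
    ∃ A B : Finset X, A ≠ B ∧ T.children C = {A, B} ∧ Disjoint A B ∧ A ∪ B = C ∧
      A.Nonempty ∧ B.Nonempty ∧ A ∈ T.clusters ∧ B ∈ T.clusters ∧ A ⊂ C ∧ B ⊂ C := by
  obtain ⟨A, B, hAB, hch⟩ := Finset.card_eq_two.1 (hT C hC h2)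
  have hAmem : A ∈ T.children C := by rw [hch]; simp
  have hBmem : B ∈ T.children C := by rw [hch]; simp
  have hdisj : Disjoint A B := T.children_disjoint hAmem hBmem hAB
  have hAc := (T.mem_children.1 hAmem)
  have hBc := (T.mem_children.1 hBmem)
  have hcover : A ∪ B = C := by
    apply Finset.Subset.antisymm
    · exact Finset.union_subset hAc.2.1.subset hBc.2.1.subset
    · intro x hx
      obtain ⟨D, hD, hxD⟩ := T.mem_child hC h2 hx
      rw [hch] at hD
      simp only [Finset.mem_insert, Finset.mem_singleton] at hD
      rcases hD with rfl | rfl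
      · exact Finset.mem_union_left _ hxD
      · exact Finset.mem_union_right _ hxD
  have hAne : A.Nonempty := by
    rcases Finset.eq_empty_or_nonempty A with rfl | h
    · rw [Finset.empty_union] at hcover; exact absurd hcover hBc.2.1.ne
    · exact h
  have hBne : B.Nonempty := by
    rcases Finset.eq_empty_or_nonempty B with rfl | h
    · rw [Finset.union_empty] at hcover; exact absurd hcover hAc.2.1.ne
    · exact h
  exact ⟨A, B, hAB, hch, hdisj, hcover, hAne, hBne, hAc.1, hBc.1, hAc.2.1, hBc.2.1⟩

lemma lca_eq_of {C A B : Finset X} (hC : C ∈ T.clusters) (hA : A ∈ T.children C)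
    (hB : B ∈ T.children C) (hAB : A ≠ B) {x y : X} (hx : x ∈ A) (hy : y ∈ B) :
    T.lca x y = C := by
  have hdisj := T.children_disjoint hA hB hAB
  have hAc := T.mem_children.1 hA
  have hBc := T.mem_children.1 hB
  have hL : T.lca x y ⊆ C := T.lca_min hC (hAc.2.1.subset hx) (hBc.2.1.subset hy)
  have hynA : y ∉ A := fun hyA => (hdisj.forall_ne_finset (by simpa using hyA) (by simpa using hy)) rfl
  rcases T.comparable (T.lca_mem x y) hAc.1 (T.left_mem_lca x y) hx with hsub | hsub
  · exact absurd (hsub (T.right_mem_lca x y)) hynA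
  · have hAL : A ⊂ T.lca x y := hsub.ssubset_of_ne (fun e => hynA (e ▸ T.right_mem_lca x y))
    by_contra hne
    exact hAc.2.2 _ (T.lca_mem x y) hAL (hL.ssubset_of_ne hne)

lemma lca_card {x y : X} (hxy : x ≠ y) : 2 ≤ (T.lca x y).card :=
  Finset.one_lt_card.2 ⟨x, T.left_mem_lca x y, y, T.right_mem_lca x y, hxy⟩

lemma lca_split {x y : X} (hxy : x ≠ y) :
    ∃ A ∈ T.children (T.lca x y), ∃ B ∈ T.children (T.lca x y), A ≠ B ∧ x ∈ A ∧ y ∈ B := by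
  obtain ⟨A, hA, hxA⟩ := T.mem_child (T.lca_mem x y) (T.lca_card hxy) (T.left_mem_lca x y)
  obtain ⟨B, hB, hyB⟩ := T.mem_child (T.lca_mem x y) (T.lca_card hxy) (T.right_mem_lca x y)
  refine ⟨A, hA, B, hB, ?_, hxA, hyB⟩
  rintro rfl
  have hAc := T.mem_children.1 hA
  have h1 := T.lca_min hAc.1 hxA hyB
  exact hAc.2.1.ne (Finset.Subset.antisymm hAc.2.1.subset h1)

/-- The parent of a cluster: the minimal cluster strictly containing it. -/
noncomputable def par (C : Finset X) : Finset X :=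
  (T.clusters.filter (fun B => C ⊂ B)).inf id

lemma par_spec {C : Finset X} (hC : C ∈ T.clusters) (hne : C.Nonempty) (hnu : C ≠ Finset.univ) :
    T.par C ∈ T.clusters ∧ C ⊂ T.par C ∧ ∀ B ∈ T.clusters, C ⊂ B → T.par C ⊆ B := by
  classical
  set s := T.clusters.filter (fun B => C ⊂ B) with hs
  have hune : s.Nonempty := ⟨Finset.univ, by simp [hs, T.top_mem, Finset.ssubset_univ_iff, hnu]⟩
  obtain ⟨x, hx⟩ := hne
  obtain ⟨m, hm, hmin⟩ := Finset.exists_min_image s Finset.card hune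
  have hmmem : m ∈ T.clusters ∧ C ⊂ m := by simpa [hs] using hm
  have hsub : ∀ b ∈ s, m ⊆ b := by
    intro b hb
    have hbmem : b ∈ T.clusters ∧ C ⊂ b := by simpa [hs] using hb
    rcases T.comparable hmmem.1 hbmem.1 (hmmem.2.subset hx) (hbmem.2.subset hx) with h | h
    · exact h
    · exact (Finset.eq_of_subset_of_card_le h (hmin b hb)) ▸ Finset.Subset.refl _
  have hpar : T.par C = m := by
    apply le_antisymm
    · exact Finset.inf_le hm
    · exact Finset.le_inf (fun b hb => hsub b hb)
  rw [hpar]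
  exact ⟨hmmem.1, hmmem.2, fun B hB hCB => hsub B (by simp [hs, hB, hCB])⟩

lemma child_par {C : Finset X} (hC : C ∈ T.clusters) (hne : C.Nonempty)
    (hnu : C ≠ Finset.univ) : C ∈ T.children (T.par C) := by
  obtain ⟨h1, h2, h3⟩ := T.par_spec hC hne hnu
  rw [mem_children]
  refine ⟨hC, h2, fun B hB hCB hBpar => ?_⟩
  exact absurd (hBpar.trans_subset (h3 B hB hCB)) (lt_irrefl B)

/-- Internal vertices: clusters of size at least 2. -/
def intl : Finset (Finset X) := T.clusters.filter (fun C => 2 ≤ C.card)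

lemma mem_intl {C : Finset X} : C ∈ T.intl ↔ C ∈ T.clusters ∧ 2 ≤ C.card := by
  simp [intl]

/-- Clusters of size ≥ 2 contained in a given set. -/
def below (C : Finset X) : Finset (Finset X) := T.intl.filter (fun D => D ⊆ C)

lemma mem_below {C D : Finset X} : D ∈ T.below C ↔ D ∈ T.clusters ∧ 2 ≤ D.card ∧ D ⊆ C := by
  simp [below, mem_intl, and_assoc]

lemma below_decomp_sets {C A B : Finset X} (hC : C ∈ T.clusters) (h2 : 2 ≤ C.card)
    (hch : T.children C = {A, B}) (hAB : A ≠ B) (hdisj : Disjoint A B) (hcover : A ∪ B = C) :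
    T.below C = insert C (T.below A ∪ T.below B) ∧
      C ∉ T.below A ∪ T.below B ∧ Disjoint (T.below A) (T.below B) := by
  have hAmem : A ∈ T.children C := by rw [hch]; simp
  have hBmem : B ∈ T.children C := by rw [hch]; simp
  have hAc := T.mem_children.1 hAmem
  have hBc := T.mem_children.1 hBmem
  refine ⟨?_, ?_, ?_⟩
  · ext D
    simp only [mem_below, Finset.mem_insert, Finset.mem_union]
    constructor
    · rintro ⟨hD, hD2, hDC⟩
      by_cases hDeq : D = C
      · exact Or.inl hDeq
      refine Or.inr ?_
      have hDC' : D ⊂ C := hDC.ssubset_of_ne hDeq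
      obtain ⟨x, hx⟩ := Finset.card_pos.1 (lt_of_lt_of_le (by norm_num) hD2)
      have hxC : x ∈ A ∪ B := hcover ▸ hDC.trans (le_refl _) hx
      rcases Finset.mem_union.1 hxC with hxA | hxB
      · left
        refine ⟨hD, hD2, ?_⟩
        rcases T.comparable hD hAc.1 hx hxA with hs | hs
        · exact hs
        · rcases eq_or_ssubset_of_subset hs with he | hss
          · exact he ▸ Finset.Subset.refl _
          · exact absurd hDC' (hAc.2.2 D hD hss)
      · right
        refine ⟨hD, hD2, ?_⟩
        rcases T.comparable hD hBc.1 hx hxB with hs | hs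
        · exact hs
        · rcases eq_or_ssubset_of_subset hs with he | hss
          · exact he ▸ Finset.Subset.refl _
          · exact absurd hDC' (hBc.2.2 D hD hss)
    · rintro (rfl | ⟨hD, hD2, hDA⟩ | ⟨hD, hD2, hDB⟩)
      · exact ⟨hC, h2, Finset.Subset.refl _⟩
      · exact ⟨hD, hD2, hDA.trans hAc.2.1.subset⟩
      · exact ⟨hD, hD2, hDB.trans hBc.2.1.subset⟩
  · intro hmem
    rcases Finset.mem_union.1 hmem with hm | hm
    · exact absurd ((T.mem_below.1 hm).2.2) (fun hs => hAc.2.1.ne (Finset.Subset.antisymm hAc.2.1.subset hs))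
    · exact absurd ((T.mem_below.1 hm).2.2) (fun hs => hBc.2.1.ne (Finset.Subset.antisymm hBc.2.1.subset hs))
  · rw [Finset.disjoint_left]
    intro D hDA hDB
    have h1 := (T.mem_below.1 hDA)
    have h2' := (T.mem_below.1 hDB)
    obtain ⟨x, hx⟩ := Finset.card_pos.1 (by omega : 0 < D.card)
    exact Finset.disjoint_left.1 hdisj (h1.2.2 hx) (h2'.2.2 hx)

lemma below_decomp {M : Type*} [AddCommMonoid M] (f : Finset X → M) {C A B : Finset X}
    (hC : C ∈ T.clusters) (h2 : 2 ≤ C.card)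
    (hch : T.children C = {A, B}) (hAB : A ≠ B) (hdisj : Disjoint A B) (hcover : A ∪ B = C) :
    ∑ D ∈ T.below C, f D = f C + (∑ D ∈ T.below A, f D + ∑ D ∈ T.below B, f D) := by
  obtain ⟨he, hnm, hdj⟩ := T.below_decomp_sets hC h2 hch hAB hdisj hcover
  rw [he, Finset.sum_insert hnm, Finset.sum_union hdj]

lemma below_card_small {C : Finset X} (h2 : C.card < 2) : T.below C = ∅ := by
  rw [Finset.eq_empty_iff_forall_notMem]
  intro D hD
  obtain ⟨_, hD2, hDC⟩ := T.mem_below.1 hD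
  exact absurd (le_trans hD2 (Finset.card_le_card hDC)) (not_le.2 h2)

lemma card_below (hT : ∀ C ∈ T.clusters, 2 ≤ C.card → (T.children C).card = 2) :
    ∀ n : ℕ, ∀ C ∈ T.clusters, C.card ≤ n → (T.below C).card = C.card - 1 := by
  intro n
  induction n with
  | zero => intro C hC hle; rw [T.below_card_small (by omega)]; simp; omega
  | succ n ih =>
    intro C hC hle
    by_cases h2 : 2 ≤ C.card
    · obtain ⟨A, B, hAB, hch, hdisj, hcover, hAne, hBne, hAcl, hBcl, hAss, hBss⟩ :=
        T.binary_children hT hC h2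
      have hcards : A.card + B.card = C.card := by
        rw [← Finset.card_union_of_disjoint hdisj, hcover]
      have hA1 : 1 ≤ A.card := Finset.card_pos.2 hAne
      have hB1 : 1 ≤ B.card := Finset.card_pos.2 hBne
      have hAn : A.card ≤ n := by omega
      have hBn : B.card ≤ n := by omega
      obtain ⟨he, hnm, hdj⟩ := T.below_decomp_sets hC h2 hch hAB hdisj hcover
      rw [he, Finset.card_insert_of_notMem hnm, Finset.card_union_of_disjoint hdj,
        ih A hAcl hAn, ih B hBcl hBn]
      omega
    · rw [T.below_card_small (by omega)]; simp; omega

lemma offDiag_pair {A B : Finset X} (hAB : A ≠ B) :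
    ({A, B} : Finset (Finset X)).offDiag = {(A, B), (B, A)} := by
  ext p
  simp only [Finset.mem_offDiag, Finset.mem_insert, Finset.mem_singleton, Prod.ext_iff]
  constructor
  · rintro ⟨(h1 | h1), (h2 | h2), hne⟩ <;> simp_all <;> tauto
  · rintro (⟨rfl, rfl⟩ | ⟨rfl, rfl⟩) <;> simp_all [hAB, hAB.symm]

lemma sum_offDiag_pair {A B : Finset X} (hAB : A ≠ B) (g : Finset X × Finset X → ℝ) :
    ∑ p ∈ ({A, B} : Finset (Finset X)).offDiag, g p = g (A, B) + g (B, A) := by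
  rw [offDiag_pair hAB, Finset.sum_pair (by simp [Prod.ext_iff, hAB])]

/-- The quantity `|A ∩ C|·|B ∩ C| summed over ordered pairs of children of D, divided
by the corresponding sum for the full children`. -/
noncomputable def rr (C D : Finset X) : ℝ :=
  (∑ p ∈ (T.children D).offDiag, ((p.1 ∩ C).card : ℝ) * ((p.2 ∩ C).card : ℝ)) /
    (∑ p ∈ (T.children D).offDiag, (p.1.card : ℝ) * (p.2.card : ℝ))

lemma rr_eq {C D A B : Finset X} (hch : T.children D = {A, B}) (hAB : A ≠ B) :
    T.rr C D = (((A ∩ C).card : ℝ) * ((B ∩ C).card) + ((B ∩ C).card : ℝ) * ((A ∩ C).card)) /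
      ((A.card : ℝ) * B.card + (B.card : ℝ) * A.card) := by
  rw [rr, hch, sum_offDiag_pair hAB, sum_offDiag_pair hAB]

lemma rr_nonneg (C D : Finset X) : 0 ≤ T.rr C D := by
  apply div_nonneg <;> exact Finset.sum_nonneg (fun p _ => by positivity)

lemma rr_zero_of_inter {C D A B : Finset X} (hch : T.children D = {A, B}) (hAB : A ≠ B)
    (h0 : (A ∩ C).card = 0 ∨ (B ∩ C).card = 0) : T.rr C D = 0 := by
  rw [T.rr_eq hch hAB]
  rcases h0 with h | h <;> rw [h] <;> simp

lemma rr_le_one {C D A B : Finset X} (hch : T.children D = {A, B}) (hAB : A ≠ B)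
    (hAne : A.Nonempty) (hBne : B.Nonempty) : T.rr C D ≤ 1 := by
  rw [T.rr_eq hch hAB]
  have hA1 : (1:ℝ) ≤ A.card := by exact_mod_cast Finset.card_pos.2 hAne
  have hB1 : (1:ℝ) ≤ B.card := by exact_mod_cast Finset.card_pos.2 hBne
  apply div_le_one_of_le₀
  · have h1 : ((A ∩ C).card : ℝ) ≤ A.card := by
      exact_mod_cast Finset.card_le_card (Finset.inter_subset_left)
    have h2 : ((B ∩ C).card : ℝ) ≤ B.card := by
      exact_mod_cast Finset.card_le_card (Finset.inter_subset_left)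
    have p1 : (0:ℝ) ≤ ((A ∩ C).card : ℝ) := by positivity
    have p2 : (0:ℝ) ≤ ((B ∩ C).card : ℝ) := by positivity
    nlinarith
  · nlinarith

/-- Key inequality: for a binary tree, the sum of `rr C` over internal vertices below `E`
is at most `|E ∩ C| - 1`. -/
lemma sum_rr_le (hT : ∀ C ∈ T.clusters, 2 ≤ C.card → (T.children C).card = 2) (C : Finset X) :
    ∀ n : ℕ, ∀ E ∈ T.clusters, E.card ≤ n →
      ∑ D ∈ T.below E, T.rr C D ≤ (((E ∩ C).card - 1 : ℕ) : ℝ) := by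
  intro n
  induction n with
  | zero =>
    intro E hE hle
    rw [T.below_card_small (by omega)]
    simp
  | succ n ih =>
    intro E hE hle
    by_cases h2 : 2 ≤ E.card
    · obtain ⟨A, B, hAB, hch, hdisj, hcover, hAne, hBne, hAcl, hBcl, hAss, hBss⟩ :=
        T.binary_children hT hE h2
      have hA1 : 1 ≤ A.card := Finset.card_pos.2 hAne
      have hB1 : 1 ≤ B.card := Finset.card_pos.2 hBne
      have hcards : A.card + B.card = E.card := by
        rw [← Finset.card_union_of_disjoint hdisj, hcover]
      have hAn : A.card ≤ n := by omega
      have hBn : B.card ≤ n := by omega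
      rw [T.below_decomp (T.rr C) hE h2 hch hAB hdisj hcover]
      have hIA := ih A hAcl hAn
      have hIB := ih B hBcl hBn
      have hEC : (E ∩ C).card = (A ∩ C).card + (B ∩ C).card := by
        rw [← hcover, Finset.union_inter_distrib_right]
        exact Finset.card_union_of_disjoint (hdisj.mono Finset.inter_subset_left Finset.inter_subset_left)
      set a := (A ∩ C).card
      set b := (B ∩ C).card
      have hkey : T.rr C E ≤ (((E ∩ C).card - 1 : ℕ) : ℝ) - ((a - 1 : ℕ) : ℝ) - ((b - 1 : ℕ) : ℝ) := by
        by_cases ha : a = 0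
        · rw [T.rr_zero_of_inter hch hAB (Or.inl ha)]
          rw [hEC, ha]
          simp
        · by_cases hb : b = 0
          · rw [T.rr_zero_of_inter hch hAB (Or.inr hb)]
            rw [hEC, hb]
            simp
          · have ha1 : 1 ≤ a := Nat.one_le_iff_ne_zero.2 ha
            have hb1 : 1 ≤ b := Nat.one_le_iff_ne_zero.2 hb
            have : (((E ∩ C).card - 1 : ℕ) : ℝ) - ((a - 1 : ℕ) : ℝ) - ((b - 1 : ℕ) : ℝ) = 1 := by
              rw [hEC, Nat.cast_sub (by omega), Nat.cast_sub ha1, Nat.cast_sub hb1]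
              push_cast
              ring
            rw [this]
            exact T.rr_le_one hch hAB hAne hBne
      linarith
    · rw [T.below_card_small (by omega)]
      simp

lemma below_univ : T.below (Finset.univ : Finset X) = T.intl := by
  rw [below, Finset.filter_true_of_mem (fun D _ => Finset.subset_univ D)]

lemma rr_self (hT : ∀ C ∈ T.clusters, 2 ≤ C.card → (T.children C).card = 2)
    {C D : Finset X} (hC : C ∈ T.clusters) (hCne : C.Nonempty) (hD : D ∈ T.intl) :
    T.rr C D = if D ⊆ C then 1 else 0 := by
  obtain ⟨hDc, hD2⟩ := T.mem_intl.1 hD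
  obtain ⟨A, B, hAB, hch, hdisj, hcover, hAne, hBne, hAcl, hBcl, hAss, hBss⟩ :=
    T.binary_children hT hDc hD2
  have hAmem : A ∈ T.children D := by rw [hch]; simp
  have hBmem : B ∈ T.children D := by rw [hch]; simp
  have hAc := T.mem_children.1 hAmem
  have hBc := T.mem_children.1 hBmem
  by_cases hsub : D ⊆ C
  · rw [if_pos hsub, T.rr_eq hch hAB]
    rw [Finset.inter_eq_left.2 (hAss.subset.trans hsub), Finset.inter_eq_left.2 (hBss.subset.trans hsub)]
    have hA1 : (1:ℝ) ≤ A.card := by exact_mod_cast Finset.card_pos.2 hAne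
    have hB1 : (1:ℝ) ≤ B.card := by exact_mod_cast Finset.card_pos.2 hBne
    apply div_self
    nlinarith
  · rw [if_neg hsub]
    apply T.rr_zero_of_inter hch hAB
    rcases T.laminar C hC D hDc with hs | hs | hs
    · -- C ⊆ D
      have hCD : C ⊂ D := hs.ssubset_of_ne (fun e => hsub (e ▸ Finset.Subset.refl _))
      obtain ⟨x, hx⟩ := hCne
      have hxD : x ∈ A ∪ B := hcover ▸ hCD.subset hx
      rcases Finset.mem_union.1 hxD with hxA | hxB
      · -- C vs A
        rcases T.comparable hC hAcl hx hxA with hs2 | hs2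
        · -- C ⊆ A, so B ∩ C = ∅
          right
          rw [Finset.card_eq_zero]
          rw [Finset.eq_empty_iff_forall_notMem]
          intro z hz
          have hzB := Finset.mem_inter.1 hz
          exact Finset.disjoint_left.1 hdisj (hs2 hzB.2) hzB.1
        · rcases eq_or_ssubset_of_subset hs2 with he | hss
          · right
            rw [Finset.card_eq_zero, Finset.eq_empty_iff_forall_notMem]
            intro z hz
            have hzB := Finset.mem_inter.1 hz
            exact Finset.disjoint_left.1 hdisj (he ▸ hzB.2) hzB.1
          · exact absurd hCD (hAc.2.2 C hC hss)
      · rcases T.comparable hC hBcl hx hxB with hs2 | hs2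
        · left
          rw [Finset.card_eq_zero, Finset.eq_empty_iff_forall_notMem]
          intro z hz
          have hzA := Finset.mem_inter.1 hz
          exact Finset.disjoint_left.1 hdisj hzA.1 (hs2 hzA.2)
        · rcases eq_or_ssubset_of_subset hs2 with he | hss
          · left
            rw [Finset.card_eq_zero, Finset.eq_empty_iff_forall_notMem]
            intro z hz
            have hzA := Finset.mem_inter.1 hz
            exact Finset.disjoint_left.1 hdisj hzA.1 (he ▸ hzA.2)
          · exact absurd hCD (hBc.2.2 C hC hss)
    · exact absurd hs hsub
    · left
      rw [Finset.card_eq_zero, Finset.eq_empty_iff_forall_notMem]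
      intro z hz
      have hzA := Finset.mem_inter.1 hz
      exact Finset.disjoint_left.1 hs hzA.2 (hAss.subset hzA.1)

lemma N_eq (hT : ∀ C ∈ T.clusters, 2 ≤ C.card → (T.children C).card = 2)
    {C : Finset X} (hC : C ∈ T.clusters) (h2 : 2 ≤ C.card) :
    ∑ D ∈ T.intl, T.rr C D = ((C.card - 1 : ℕ) : ℝ) := by
  have hCne : C.Nonempty := Finset.card_pos.1 (by omega)
  calc ∑ D ∈ T.intl, T.rr C D = ∑ D ∈ T.intl, if D ⊆ C then (1:ℝ) else 0 :=
        Finset.sum_congr rfl (fun D hD => T.rr_self hT hC hCne hD)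
    _ = ((T.intl.filter (fun D => D ⊆ C)).card : ℝ) := by rw [Finset.sum_boole]
    _ = ((T.below C).card : ℝ) := rfl
    _ = ((C.card - 1 : ℕ) : ℝ) := by
        rw [T.card_below hT C.card C hC (le_refl _)]

/-- The increment of the height function at a cluster. -/
noncomputable def dd (h : Finset X → ℝ) (C : Finset X) : ℝ :=
  if C = Finset.univ then h Finset.univ else h C - h (T.par C)

lemma tele (h : Finset X → ℝ) {x y : X} (hxy : x ≠ y) :
    ∑ C ∈ T.intl, (if x ∈ C ∧ y ∈ C then T.dd h C else 0) = h (T.lca x y) := by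
  classical
  set L := T.lca x y with hL
  set S := T.intl.filter (fun C => x ∈ C ∧ y ∈ C) with hS
  have memS : ∀ C, C ∈ S ↔ (C ∈ T.clusters ∧ 2 ≤ C.card ∧ x ∈ C ∧ y ∈ C) := by
    intro C; simp [hS, mem_intl, and_assoc]
  have hunivS : Finset.univ ∈ S := by
    rw [memS]
    exact ⟨T.top_mem, Finset.one_lt_card.2 ⟨x, by simp, y, by simp, hxy⟩, by simp, by simp⟩
  have hLS : L ∈ S := by
    rw [memS]
    exact ⟨T.lca_mem x y, T.lca_card hxy, T.left_mem_lca x y, T.right_mem_lca x y⟩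
  have hstep1 : ∑ C ∈ T.intl, (if x ∈ C ∧ y ∈ C then T.dd h C else 0) = ∑ C ∈ S, T.dd h C :=
    (Finset.sum_filter _ _).symm
  rw [hstep1, ← Finset.add_sum_erase _ _ hunivS]
  have hstep2 : ∑ C ∈ S.erase Finset.univ, T.dd h C
      = ∑ C ∈ S.erase Finset.univ, (h C - h (T.par C)) := by
    apply Finset.sum_congr rfl
    intro C hC
    exact if_neg (Finset.mem_erase.1 hC).1
  have hparfacts : ∀ C ∈ S.erase Finset.univ, T.par C ∈ T.clusters ∧ C ⊂ T.par C ∧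
      ∀ B ∈ T.clusters, C ⊂ B → T.par C ⊆ B := by
    intro C hC
    obtain ⟨hCne, hCS⟩ := Finset.mem_erase.1 hC
    obtain ⟨h1, h2, _, _⟩ := (memS C).1 hCS
    exact T.par_spec h1 (Finset.card_pos.1 (by omega)) hCne
  have hstep3 : ∑ C ∈ S.erase Finset.univ, h (T.par C) = ∑ B ∈ S.erase L, h B := by
    apply Finset.sum_bij (fun C _ => T.par C)
    · -- maps to
      intro C hC
      obtain ⟨hCne, hCS⟩ := Finset.mem_erase.1 hC
      obtain ⟨h1, h2, h3, h4⟩ := (memS C).1 hCS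
      obtain ⟨hp1, hp2, hp3⟩ := hparfacts C hC
      rw [Finset.mem_erase, memS]
      refine ⟨?_, hp1, le_trans h2 (Finset.card_le_card hp2.subset), hp2.subset h3, hp2.subset h4⟩
      intro he
      have hLC : L ⊆ C := T.lca_min h1 h3 h4
      have : L ⊂ L := (hLC.trans_ssubset hp2).trans_eq he
      exact (lt_irrefl L) this
    · -- injective
      intro C1 h1 C2 h2 heq
      obtain ⟨hC1ne, hC1S⟩ := Finset.mem_erase.1 h1
      obtain ⟨hc1, hcard1, hx1, hy1⟩ := (memS C1).1 hC1S
      obtain ⟨hC2ne, hC2S⟩ := Finset.mem_erase.1 h2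
      obtain ⟨hc2, hcard2, hx2, hy2⟩ := (memS C2).1 hC2S
      obtain ⟨hp11, hp12, hp13⟩ := hparfacts C1 h1
      obtain ⟨hp21, hp22, hp23⟩ := hparfacts C2 h2
      by_contra hne
      rcases T.comparable hc1 hc2 hx1 hx2 with hs | hs
      · have h5 : T.par C1 ⊆ C2 := hp13 C2 hc2 (hs.ssubset_of_ne hne)
        rw [heq] at h5
        exact absurd (h5.trans_ssubset hp22) (lt_irrefl (T.par C2))
      · have h5 : T.par C2 ⊆ C1 := hp23 C1 hc1 (hs.ssubset_of_ne (Ne.symm hne))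
        rw [← heq] at h5
        exact absurd (h5.trans_ssubset hp12) (lt_irrefl (T.par C1))
    · -- surjective
      intro B hB
      obtain ⟨hBne, hBS⟩ := Finset.mem_erase.1 hB
      obtain ⟨hBc, hBcard, hBx, hBy⟩ := (memS B).1 hBS
      have hLB : L ⊂ B := (T.lca_min hBc hBx hBy).ssubset_of_ne (Ne.symm hBne)
      set s' := S.filter (fun M => M ⊂ B) with hs'
      have hs'ne : s'.Nonempty := ⟨L, by simp [hs', hLS, hLB]⟩
      obtain ⟨M, hM, hmax⟩ := Finset.exists_max_image s' Finset.card hs'ne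
      have hMfacts : M ∈ S ∧ M ⊂ B := by simpa [hs'] using hM
      obtain ⟨hMc, hMcard, hMx, hMy⟩ := (memS M).1 hMfacts.1
      have hMnu : M ≠ Finset.univ := by
        intro he
        have h6 := Finset.card_lt_card hMfacts.2
        have h7 := Finset.card_le_univ B
        rw [he, Finset.card_univ] at h6
        omega
      have hMe : M ∈ S.erase Finset.univ := Finset.mem_erase.2 ⟨hMnu, hMfacts.1⟩
      obtain ⟨hp1, hp2, hp3⟩ := hparfacts M hMe
      refine ⟨M, hMe, ?_⟩
      have hsub : T.par M ⊆ B := hp3 B hBc hMfacts.2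
      rcases eq_or_ssubset_of_subset hsub with he | hss
      · exact he
      · exfalso
        have hpS : T.par M ∈ s' := by
          rw [hs', Finset.mem_filter]
          refine ⟨(memS _).2 ⟨hp1, le_trans hMcard (Finset.card_le_card hp2.subset),
            hp2.subset hMx, hp2.subset hMy⟩, hss⟩
        exact absurd (hmax _ hpS) (not_le.2 (Finset.card_lt_card hp2))
    · intro C hC; rfl
  rw [hstep2, Finset.sum_sub_distrib, hstep3,
    Finset.sum_erase_eq_sub hunivS, Finset.sum_erase_eq_sub hLS]
  have : T.dd h Finset.univ = h Finset.univ := if_pos rfl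
  rw [this]
  ring


lemma dd_nonpos (hT : ∀ C ∈ T.clusters, 2 ≤ C.card → (T.children C).card = 2)
    (h : Finset X → ℝ)
    (hpos : ∀ C ∈ T.clusters, ∀ A ∈ T.children C, 2 ≤ A.card → h A < h C)
    {C : Finset X} (hC : C ∈ T.intl) (hne : C ≠ Finset.univ) : T.dd h C ≤ 0 := by
  obtain ⟨hCc, hC2⟩ := T.mem_intl.1 hC
  have hCne : C.Nonempty := Finset.card_pos.1 (by omega)
  obtain ⟨hp1, hp2, hp3⟩ := T.par_spec hCc hCne hne
  have hchild := T.child_par hCc hCne hne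
  have := hpos (T.par C) hp1 C hchild hC2
  rw [dd, if_neg hne]
  linarith

lemma coeff_eq {x y : X} {A B : Finset X}
    (hch : T.children (T.lca x y) = {A, B}) (hAB : A ≠ B) :
    T.coeff x y = 1 / ((A.card : ℝ) * B.card + (B.card : ℝ) * A.card) := by
  rw [coeff, hch, sum_offDiag_pair hAB, Finset.card_pair hAB]
  norm_num

lemma fiber_sum (hT : ∀ C ∈ T.clusters, 2 ≤ C.card → (T.children C).card = 2)
    (C : Finset X) {D : Finset X} (hD : D ∈ T.intl) :
    ∑ p ∈ ((Finset.univ : Finset X).offDiag.filter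
        (fun p => p.1 ∈ C ∧ p.2 ∈ C)).filter (fun p => T.lca p.1 p.2 = D),
      T.coeff p.1 p.2 = T.rr C D := by
  classical
  obtain ⟨hDc, hD2⟩ := T.mem_intl.1 hD
  obtain ⟨A, B, hAB, hch, hdisj, hcover, hAne, hBne, hAcl, hBcl, hAss, hBss⟩ :=
    T.binary_children hT hDc hD2
  have hAmem : A ∈ T.children D := by rw [hch]; simp
  have hBmem : B ∈ T.children D := by rw [hch]; simp
  have hfib : ((Finset.univ : Finset X).offDiag.filter
      (fun p => p.1 ∈ C ∧ p.2 ∈ C)).filter (fun p => T.lca p.1 p.2 = D)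
      = ((A ∩ C) ×ˢ (B ∩ C)) ∪ ((B ∩ C) ×ˢ (A ∩ C)) := by
    ext p
    simp only [Finset.mem_filter, Finset.mem_offDiag, Finset.mem_union, Finset.mem_product,
      Finset.mem_inter, Finset.mem_univ, true_and]
    constructor
    · rintro ⟨⟨hne, h1C, h2C⟩, hlca⟩
      obtain ⟨A', hA', B', hB', hA'B', hx, hy⟩ := T.lca_split hne
      rw [hlca, hch] at hA' hB'
      simp only [Finset.mem_insert, Finset.mem_singleton] at hA' hB'
      rcases hA' with rfl | rfl <;> rcases hB' with rfl | rfl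
      · exact absurd rfl hA'B'
      · exact Or.inl ⟨⟨hx, h1C⟩, hy, h2C⟩
      · exact Or.inr ⟨⟨hx, h1C⟩, hy, h2C⟩
      · exact absurd rfl hA'B'
    · rintro (⟨⟨h1A, h1C⟩, h2B, h2C⟩ | ⟨⟨h1B, h1C⟩, h2A, h2C⟩)
      · have hne : p.1 ≠ p.2 := fun e => Finset.disjoint_left.1 hdisj h1A (e ▸ h2B)
        exact ⟨⟨hne, h1C, h2C⟩, T.lca_eq_of hDc hAmem hBmem hAB h1A h2B⟩
      · have hne : p.1 ≠ p.2 := fun e => Finset.disjoint_left.1 hdisj h2A (e ▸ h1B)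
        exact ⟨⟨hne, h1C, h2C⟩, T.lca_eq_of hDc hBmem hAmem hAB.symm h1B h2A⟩
  have hdisjP : Disjoint ((A ∩ C) ×ˢ (B ∩ C)) ((B ∩ C) ×ˢ (A ∩ C)) := by
    rw [Finset.disjoint_left]
    rintro p hp1 hp2
    rw [Finset.mem_product] at hp1 hp2
    exact Finset.disjoint_left.1 hdisj (Finset.mem_inter.1 hp1.1).1 (Finset.mem_inter.1 hp2.1).1
  rw [hfib, Finset.sum_union hdisjP]
  set c : ℝ := 1 / ((A.card : ℝ) * B.card + (B.card : ℝ) * A.card) with hc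
  have hval1 : ∀ p ∈ (A ∩ C) ×ˢ (B ∩ C), T.coeff p.1 p.2 = c := by
    intro p hp
    rw [Finset.mem_product] at hp
    have h1A := (Finset.mem_inter.1 hp.1).1
    have h2B := (Finset.mem_inter.1 hp.2).1
    have hlca : T.lca p.1 p.2 = D := T.lca_eq_of hDc hAmem hBmem hAB h1A h2B
    rw [T.coeff_eq (by rw [hlca]; exact hch) hAB, hc]
  have hval2 : ∀ p ∈ (B ∩ C) ×ˢ (A ∩ C), T.coeff p.1 p.2 = c := by
    intro p hp
    rw [Finset.mem_product] at hp
    have h1B := (Finset.mem_inter.1 hp.1).1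
    have h2A := (Finset.mem_inter.1 hp.2).1
    have hlca : T.lca p.1 p.2 = D := T.lca_eq_of hDc hBmem hAmem hAB.symm h1B h2A
    rw [T.coeff_eq (by rw [hlca]; exact hch) hAB, hc]
  have hsum1 : ∑ p ∈ (A ∩ C) ×ˢ (B ∩ C), T.coeff p.1 p.2
      = ((A ∩ C).card : ℝ) * ((B ∩ C).card) * c := by
    rw [Finset.sum_congr rfl hval1, Finset.sum_const, Finset.card_product, nsmul_eq_mul]
    push_cast; ring
  have hsum2 : ∑ p ∈ (B ∩ C) ×ˢ (A ∩ C), T.coeff p.1 p.2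
      = ((B ∩ C).card : ℝ) * ((A ∩ C).card) * c := by
    rw [Finset.sum_congr rfl hval2, Finset.sum_const, Finset.card_product, nsmul_eq_mul]
    push_cast; ring
  rw [hsum1, hsum2, T.rr_eq hch hAB, hc]
  ring


lemma score_formula (T' : RPhyloTree X)
    (hT' : ∀ C ∈ T'.clusters, 2 ≤ C.card → (T'.children C).card = 2)
    (h : Finset X → ℝ) :
    T'.score (inducedDissim T h)
      = ∑ C ∈ T.intl, T.dd h C * (∑ D ∈ T'.intl, T'.rr C D) := by
  classical
  have stepA : T'.score (inducedDissim T h)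
      = ∑ p ∈ (Finset.univ : Finset X).offDiag, T'.coeff p.1 p.2 * h (T.lca p.1 p.2) := by
    rw [score, Finset.mul_sum]
    apply Finset.sum_congr rfl
    intro p hp
    have hne : p.1 ≠ p.2 := (Finset.mem_offDiag.1 hp).2.2
    rw [inducedDissim, if_neg hne]
    ring
  rw [stepA]
  have stepB : ∀ p ∈ (Finset.univ : Finset X).offDiag,
      T'.coeff p.1 p.2 * h (T.lca p.1 p.2)
        = ∑ C ∈ T.intl, T'.coeff p.1 p.2 * (if p.1 ∈ C ∧ p.2 ∈ C then T.dd h C else 0) := by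
    intro p hp
    have hne : p.1 ≠ p.2 := (Finset.mem_offDiag.1 hp).2.2
    rw [← Finset.mul_sum, T.tele h hne]
  rw [Finset.sum_congr rfl stepB, Finset.sum_comm]
  apply Finset.sum_congr rfl
  intro C hC
  have stepC : ∑ p ∈ (Finset.univ : Finset X).offDiag,
      T'.coeff p.1 p.2 * (if p.1 ∈ C ∧ p.2 ∈ C then T.dd h C else 0)
      = T.dd h C * ∑ p ∈ (Finset.univ : Finset X).offDiag.filter
          (fun p => p.1 ∈ C ∧ p.2 ∈ C), T'.coeff p.1 p.2 := by
    have e1 : ∀ p ∈ (Finset.univ : Finset X).offDiag,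
        T'.coeff p.1 p.2 * (if p.1 ∈ C ∧ p.2 ∈ C then T.dd h C else 0)
          = (if p.1 ∈ C ∧ p.2 ∈ C then T'.coeff p.1 p.2 * T.dd h C else 0) := by
      intro p _
      by_cases hp : p.1 ∈ C ∧ p.2 ∈ C <;> simp [hp]
    rw [Finset.sum_congr rfl e1, ← Finset.sum_filter, ← Finset.sum_mul]
    ring
  rw [stepC]
  congr 1
  set s := (Finset.univ : Finset X).offDiag.filter (fun p => p.1 ∈ C ∧ p.2 ∈ C) with hs
  have hmaps : ∀ p ∈ s, T'.lca p.1 p.2 ∈ T'.intl := by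
    intro p hp
    have hne : p.1 ≠ p.2 := (Finset.mem_offDiag.1 (Finset.mem_filter.1 hp).1).2.2
    exact T'.mem_intl.2 ⟨T'.lca_mem p.1 p.2, T'.lca_card hne⟩
  rw [← Finset.sum_fiberwise_of_maps_to hmaps (fun p => T'.coeff p.1 p.2)]
  apply Finset.sum_congr rfl
  intro D hD
  exact T'.fiber_sum hT' C hD

theorem score_min_aux (hT : ∀ C ∈ T.clusters, 2 ≤ C.card → (T.children C).card = 2)
    (h : Finset X → ℝ)
    (hpos : ∀ C ∈ T.clusters, ∀ A ∈ T.children C, 2 ≤ A.card → h A < h C) :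
    ∀ T' : RPhyloTree X, (∀ C ∈ T'.clusters, 2 ≤ C.card → (T'.children C).card = 2) →
      T.score (inducedDissim T h) ≤ T'.score (inducedDissim T h) := by
  intro T' hT'
  rw [T.score_formula T hT h, T.score_formula T' hT' h]
  apply Finset.sum_le_sum
  intro C hC
  obtain ⟨hCc, hC2⟩ := T.mem_intl.1 hC
  by_cases hCu : C = Finset.univ
  · subst hCu
    rw [T.N_eq hT hCc hC2, T'.N_eq hT' T'.top_mem hC2]
  · have hdd : T.dd h C ≤ 0 := T.dd_nonpos hT h hpos hC hCu
    have hNle : ∑ D ∈ T'.intl, T'.rr C D ≤ ((C.card - 1 : ℕ) : ℝ) := by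
      have := T'.sum_rr_le hT' C (Fintype.card X) Finset.univ T'.top_mem
        (by rw [Finset.card_univ])
      rwa [T'.below_univ, Finset.univ_inter] at this
    rw [T.N_eq hT hCc hC2]
    exact mul_le_mul_of_nonpos_left hNle hdd


end RPhyloTree

/-- Theorem 4.2 (first part): if `T` is a binary rooted phylogenetic tree on `X` with an
interior-positive normalized equidistant edge weighting (encoded by a height function
`h` on the clusters vanishing on singletons and strictly increasing from every internal
child to its parent) and `D = D_{(T,ω)}` is the induced dissimilarity, then `T` attains
the minimum NEME score among all binary rooted phylogenetic trees on `X`. -/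
theorem stmt16 {X : Type*} [Fintype X] [DecidableEq X]
    (t : RPhyloTree X) (ht : t.IsBinary) (h : Finset X → ℝ)
    (h0 : ∀ x : X, h ({x} : Finset X) = 0)
    (hpos : ∀ C ∈ t.clusters, ∀ A ∈ t.children C, 2 ≤ A.card → h A < h C) :
    ∀ t' : RPhyloTree X, t'.IsBinary →
      t.score (inducedDissim t h) ≤ t'.score (inducedDissim t h) := by
  intro t' ht'
  have ht2 : ∀ C ∈ t.clusters, 2 ≤ C.card → (t.children C).card = 2 := ht
  have ht'2 : ∀ C ∈ t'.clusters, 2 ≤ C.card → (t'.children C).card = 2 := ht'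
  exact t.score_min_aux ht2 h hpos t' ht'2
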